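/- arXiv:math/0701359 — 2 statements merged into one kernel-verified Lean document; each statement's English description precedes it below -/
import Mathlib

section
/- For an n-state ergodic Markov chain with digraph G, the diagonal mean first passage (return) times satisfy m_{jj} = σ_{n-1}/q_j, where σ_{n-1} = Σ_{k=1}^n q_k is the total weight of all spanning converging trees of G and q_j is the total weight of spanning trees converging to j. -/
open scoped Classical
open Finset Matrix

namespace MFPT

variable {n : ℕ}

/-- The step relation of a functional subgraph: `a → b` when `F a = some b`. -/
def Step (F : Fin n → Option (Fin n)) (a b : Fin n) : Prop := F a = some b

/-- `F` is a spanning in-forest of the weighted digraph with weight matrix `w`: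
every chosen arc is a genuine (loopless, positive-weight) arc and there is no directed cycle.
Each weak component of such a functional digraph is a converging tree (root = the vertex
mapped to `none`). -/
def IsInForest (w : Matrix (Fin n) (Fin n) ℝ) (F : Fin n → Option (Fin n)) : Prop :=
  (∀ v u, F v = some u → v ≠ u ∧ 0 < w v u) ∧ ∀ v, ¬ Relation.TransGen (Step F) v v

/-- Weight of a spanning subgraph: the product of its arc weights. -/
noncomputable def forestWeight (w : Matrix (Fin n) (Fin n) ℝ) (F : Fin n → Option (Fin n)) : ℝ :=
  ∏ v, (F v).elim 1 (fun u => w v u)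

/-- Number of arcs of a functional subgraph. -/
def arcCount (F : Fin n → Option (Fin n)) : ℕ :=
  (Finset.univ.filter fun v => (F v).isSome).card

/-- Vertex `i` belongs to the tree of `F` converging to (rooted at) `j`. -/
def InTreeOf (F : Fin n → Option (Fin n)) (i j : Fin n) : Prop :=
  Relation.ReflTransGen (Step F) i j ∧ F j = none

/-- `σ_k`: total weight of spanning in-forests with `k` arcs. -/
noncomputable def sigmaW (w : Matrix (Fin n) (Fin n) ℝ) (k : ℕ) : ℝ :=
  ∑ F : Fin n → Option (Fin n),
    if IsInForest w F ∧ arcCount F = k then forestWeight w F else 0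

/-- `Q_k`: the matrix whose `(i,j)` entry is the total weight of in-forests with `k` arcs
in which `i` belongs to the tree converging to `j`. -/
noncomputable def Qmat (w : Matrix (Fin n) (Fin n) ℝ) (k : ℕ) : Matrix (Fin n) (Fin n) ℝ :=
  Matrix.of fun i j => ∑ F : Fin n → Option (Fin n),
    if IsInForest w F ∧ arcCount F = k ∧ InTreeOf F i j then forestWeight w F else 0

/-- `q_j`: total weight of spanning trees converging to `j` (in-forests with `n-1` arcs
whose unique root is `j`). -/
noncomputable def treeWeight (w : Matrix (Fin n) (Fin n) ℝ) (j : Fin n) : ℝ :=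
  ∑ F : Fin n → Option (Fin n),
    if IsInForest w F ∧ arcCount F = n - 1 ∧ F j = none then forestWeight w F else 0

/-- `f_{ij}`: total weight of 2-tree in-forests having one tree containing `i` and the other
tree converging to `j`. -/
noncomputable def fWeight (w : Matrix (Fin n) (Fin n) ℝ) (i j : Fin n) : ℝ :=
  ∑ F : Fin n → Option (Fin n),
    if IsInForest w F ∧ arcCount F = n - 2 ∧ F j = none ∧
        ¬ Relation.ReflTransGen (Step F) i j
      then forestWeight w F else 0

/-- The Laplacian matrix of the weighted digraph with weight matrix `w`. -/
noncomputable def lap (w : Matrix (Fin n) (Fin n) ℝ) : Matrix (Fin n) (Fin n) ℝ :=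
  Matrix.of fun i j => if i = j then ∑ k ∈ Finset.univ.erase i, w i k else - w i j

/-- `X` is the group inverse of `L`. -/
def IsGroupInverse (L X : Matrix (Fin n) (Fin n) ℝ) : Prop :=
  L * X * L = L ∧ X * L * X = X ∧ L * X = X * L

/-- `T` is (row-)stochastic. -/
def IsStochastic (T : Matrix (Fin n) (Fin n) ℝ) : Prop :=
  (∀ i j, 0 ≤ T i j) ∧ ∀ i, ∑ j, T i j = 1

/-- Irreducibility of `T`. -/
def IsIrreducible (T : Matrix (Fin n) (Fin n) ℝ) : Prop :=
  ∀ i j, ∃ k : ℕ, 0 < (T ^ k) i j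

/-- Ergodicity (primitivity) of `T`: some power of `T` is entrywise positive. -/
def IsErgodic (T : Matrix (Fin n) (Fin n) ℝ) : Prop :=
  ∃ N : ℕ, ∀ i j, 0 < (T ^ N) i j

/-- `π` is a stationary distribution of `T`. -/
def IsStationary (T : Matrix (Fin n) (Fin n) ℝ) (π : Fin n → ℝ) : Prop :=
  (∀ i, 0 ≤ π i) ∧ (∑ i, π i = 1) ∧ ∀ j, ∑ i, π i * T i j = π j

/-- Probability of the trajectory `p` of length `k` under transition matrix `T`. -/
noncomputable def pathProb (T : Matrix (Fin n) (Fin n) ℝ) (k : ℕ)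
    (p : Fin (k + 1) → Fin n) : ℝ :=
  ∏ t : Fin k, T (p t.castSucc) (p t.succ)

/-- `Pr(F_{ij} = k)`: probability that, starting at `i`, the chain first reaches `j`
(at a step `p ≥ 1`) exactly at time `k`. -/
noncomputable def firstPassageProb (T : Matrix (Fin n) (Fin n) ℝ) (i j : Fin n) (k : ℕ) : ℝ :=
  ∑ p : Fin (k + 1) → Fin n,
    if p 0 = i ∧ p (Fin.last k) = j ∧
        (∀ t : Fin (k + 1), t ≠ 0 → t ≠ Fin.last k → p t ≠ j)
      then pathProb T k p else 0

/-- Mean first passage time `m_{ij} = E F_{ij} = ∑ k k·Pr(F_{ij}=k)`. -/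
noncomputable def mfpt (T : Matrix (Fin n) (Fin n) ℝ) (i j : Fin n) : ℝ :=
  ∑' k : ℕ, (k : ℝ) * firstPassageProb T i j k

end MFPT

/-!
The tree weights `q` form an invariant vector of `T` (Markov chain tree theorem). Adding the
arc `r → u` to a spanning tree converging to `r` is a bijection onto the functional graphs
`G` with positive arcs in which every vertex eventually reaches `r` and `G r = u`; deleting
the arc leaving `r` inverts it. Summing over `u` shows that `q l` is the total weight of the
functional graphs in which every vertex reaches `l`; summing over trees converging to `i`
with the extra arc `i → l` counts each such graph once more, with `i` the predecessor of `l`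
on its cycle. Hence `∑ i, q i * T i l = q l`.

First-step analysis gives `m_ij = 1 + ∑_{l ≠ j} T_il m_lj`, the series converging because,
by irreducibility, the probability of avoiding `j` for `k` steps decays geometrically in `k`.
Multiplying by an invariant vector `π` and summing over `i` leaves Kac's formula
`π_j m_jj = ∑ i, π i`. Finally `q_j > 0` (a tree of shortest paths to `j`) and
`σ_{n-1} = ∑ k, q_k`, because a forest with `n - 1` arcs has exactly one root.
-/

namespace MFPT

open Function Filter Topology

variable {n : ℕ}

section SpanningTree

variable {w : Matrix (Fin n) (Fin n) ℝ} {F : Fin n → Option (Fin n)} {r : Fin n}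

lemma IsInForest.exists_root (hF : IsInForest w F) (v : Fin n) :
    ∃ r, Relation.ReflTransGen (Step F) v r ∧ F r = none := by
  have hwf : WellFounded fun a b => Relation.TransGen (Step F) b a := by
    have : IsTrans (Fin n) fun a b => Relation.TransGen (Step F) b a :=
      ⟨fun _ _ _ hab hbc => hbc.trans hab⟩
    have : Std.Irrefl fun a b => Relation.TransGen (Step F) b a := ⟨hF.2⟩
    exact Finite.wellFounded_of_trans_of_irrefl _
  induction v using hwf.induction with
  | _ v ih =>
    cases hv : F v with
    | none => exact ⟨v, .refl, hv⟩
    | some u =>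
      obtain ⟨r, hur, hr⟩ := ih u (.single hv)
      exact ⟨r, .head hv hur, hr⟩

lemma card_filter_eq_none (h : arcCount F = n - 1) (hn : 0 < n) :
    #{v | F v = none} = 1 := by
  have hsplit := card_filter_add_card_filter_not (s := univ) (fun v => (F v).isSome)
  simp only [Bool.not_eq_true, Option.isSome_eq_false_iff, Option.isNone_iff_eq_none,
    card_univ, Fintype.card_fin] at hsplit
  rw [arcCount] at h
  omega

def IsSpanningTree (w : Matrix (Fin n) (Fin n) ℝ) (F : Fin n → Option (Fin n)) (r : Fin n) :
    Prop :=
  IsInForest w F ∧ arcCount F = n - 1 ∧ F r = none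

lemma IsSpanningTree.eq_none_iff (hF : IsSpanningTree w F r) {v : Fin n} :
    F v = none ↔ v = r := by
  obtain ⟨a, ha⟩ := card_eq_one.mp (card_filter_eq_none hF.2.1 r.pos)
  have hmem : ∀ v, F v = none ↔ v = a := fun v => by
    simpa using congrArg (v ∈ ·) ha
  rw [hmem, (hmem r).mp hF.2.2]

lemma IsSpanningTree.reflTransGen (hF : IsSpanningTree w F r) (v : Fin n) :
    Relation.ReflTransGen (Step F) v r := by
  obtain ⟨r', hvr', hr'⟩ := hF.1.exists_root v
  rwa [← hF.eq_none_iff.mp hr']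

lemma IsSpanningTree.exists_eq_some (hF : IsSpanningTree w F r) {v : Fin n} (hv : v ≠ r) :
    ∃ u, F v = some u :=
  Option.ne_none_iff_exists'.mp (mt hF.eq_none_iff.mp hv)

lemma arcCount_eq_of_eq_none_iff (h : ∀ v, F v = none ↔ v = r) : arcCount F = n - 1 := by
  have : ({v | (F v).isSome} : Finset (Fin n)) = univ.erase r := by
    ext v
    simp [← h v, Option.isSome_iff_ne_none]
  rw [arcCount, this, card_erase_of_mem (mem_univ r), card_univ, Fintype.card_fin]

lemma isSpanningTree_of_eq_none_iff (hF : IsInForest w F) (h : ∀ v, F v = none ↔ v = r) :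
    IsSpanningTree w F r :=
  ⟨hF, arcCount_eq_of_eq_none_iff h, (h r).mpr rfl⟩

lemma IsInForest.forestWeight_pos (hF : IsInForest w F) : 0 < forestWeight w F :=
  prod_pos fun v _ => by
    rcases hv : F v with _ | u
    · simp
    · simpa using (hF.1 v u hv).2

lemma IsSpanningTree.treeWeight_pos (hF : IsSpanningTree w F r) : 0 < treeWeight w r := by
  have hF' : IsInForest w F ∧ arcCount F = n - 1 ∧ F r = none := hF
  refine sum_pos' (fun F' _ => ?_)
    ⟨F, mem_univ _, by rw [if_pos hF']; exact hF.1.forestWeight_pos⟩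
  split_ifs with h
  exacts [h.1.forestWeight_pos.le, le_rfl]

lemma sigmaW_eq_sum_treeWeight (w : Matrix (Fin n) (Fin n) ℝ) (hn : 0 < n) :
    sigmaW w (n - 1) = ∑ k, treeWeight w k := by
  simp only [sigmaW, treeWeight]
  rw [sum_comm]
  refine sum_congr rfl fun F _ => ?_
  by_cases hF : IsInForest w F ∧ arcCount F = n - 1
  · simp only [hF, true_and, if_true]
    rw [← sum_filter, sum_const, card_filter_eq_none hF.2 hn, one_smul]
  · rw [if_neg hF]
    exact (sum_eq_zero fun k _ => if_neg fun h => hF ⟨h.1, h.2.1⟩).symm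

end SpanningTree

section Reach

variable {α : Type*} {G : α → α} {r : α}

def ReachedFromAll (G : α → α) (r : α) : Prop :=
  ∀ v, ∃ m, G^[m] v = r

lemma ReachedFromAll.mem_periodicPts (h : ReachedFromAll G r) : r ∈ periodicPts G := by
  obtain ⟨m, hm⟩ := h (G r)
  exact mk_mem_periodicPts m.succ_pos (by rwa [IsPeriodicPt, IsFixedPt, iterate_succ_apply])

lemma ReachedFromAll.apply (h : ReachedFromAll G r) : ReachedFromAll G (G r) := fun v => by
  obtain ⟨m, hm⟩ := h v
  exact ⟨m + 1, by rw [iterate_succ_apply', hm]⟩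

lemma ReachedFromAll.existsUnique_apply_eq (h : ReachedFromAll G r) :
    ∃! i, ReachedFromAll G i ∧ G i = r := by
  obtain ⟨p, hp, hpr⟩ := Function.mem_periodicPts.mp h.mem_periodicPts
  have hpred : G (G^[p - 1] r) = r := by
    rw [← iterate_succ_apply' G, Nat.succ_eq_add_one, Nat.sub_add_cancel hp, hpr]
  have hreach : ReachedFromAll G (G^[p - 1] r) := fun v => by
    obtain ⟨m, hm⟩ := h v
    exact ⟨p - 1 + m, by rw [iterate_add_apply, hm]⟩
  refine ⟨_, ⟨hreach, hpred⟩, fun i hi => ?_⟩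
  exact (bijOn_periodicPts G).injOn hi.1.mem_periodicPts hreach.mem_periodicPts
    (hi.2.trans hpred.symm)

lemma sum_ite_reachedFromAll_apply_eq [Fintype α] [DecidableEq α] (G : α → α) (l : α)
    (x : ℝ) :
    ∑ i, (if ReachedFromAll G i ∧ G i = l then x else 0) =
      if ReachedFromAll G l then x else 0 := by
  by_cases hl : ReachedFromAll G l
  · obtain ⟨i, hi, huniq⟩ := hl.existsUnique_apply_eq
    rw [if_pos hl, sum_eq_single_of_mem i (mem_univ _)
      (fun k _ hk => if_neg fun h => hk (huniq k h)), if_pos hi]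
  · rw [if_neg hl]
    refine sum_eq_zero fun i _ => if_neg ?_
    rintro ⟨hi, rfl⟩
    exact hl hi.apply

end Reach

section TreeTheorem

variable {T : Matrix (Fin n) (Fin n) ℝ} {F : Fin n → Option (Fin n)} {G : Fin n → Fin n}
  {r u : Fin n}

def cutAt (G : Fin n → Fin n) (r : Fin n) : Fin n → Option (Fin n) :=
  fun v => if v = r then none else some (G v)

lemma step_cutAt {a b : Fin n} : Step (cutAt G r) a b ↔ a ≠ r ∧ G a = b := by
  unfold Step cutAt
  split_ifs with h <;> simp [h]

lemma ReachedFromAll.not_transGen_cutAt (h : ReachedFromAll G r) (v : Fin n) :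
    ¬ Relation.TransGen (Step (cutAt G r)) v v := by
  -- Vertices on a cycle of the cut graph differ from `r` and are mapped by `G` to vertices on a
  -- cycle, yet the orbit of `v` reaches `r`.
  have hcycle : ∀ x, Relation.TransGen (Step (cutAt G r)) x x →
      x ≠ r ∧ Relation.TransGen (Step (cutAt G r)) (G x) (G x) := by
    intro x hx
    obtain ⟨b, hxb, hbx⟩ := Relation.TransGen.head'_iff.mp hx
    obtain ⟨hxr, rfl⟩ := step_cutAt.mp hxb
    exact ⟨hxr, Relation.TransGen.tail' hbx hxb⟩
  intro hv
  have horbit : ∀ k, Relation.TransGen (Step (cutAt G r)) (G^[k] v) (G^[k] v) := by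
    intro k
    induction k with
    | zero => exact hv
    | succ k ih => rw [iterate_succ_apply']; exact (hcycle _ ih).2
  obtain ⟨m, hm⟩ := h v
  exact (hcycle _ (horbit m)).1 hm

lemma ReachedFromAll.isSpanningTree_cutAt (h : ReachedFromAll G r)
    (hpos : ∀ v, 0 < T v (G v)) : IsSpanningTree T (cutAt G r) r := by
  refine isSpanningTree_of_eq_none_iff ⟨fun v u hvu => ?_, h.not_transGen_cutAt⟩ fun v => ?_
  · obtain ⟨hvr, rfl⟩ := step_cutAt.mp hvu
    refine ⟨fun hfix => hvr ?_, hpos v⟩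
    obtain ⟨m, hm⟩ := h v
    rwa [iterate_fixed hfix.symm] at hm
  · by_cases hv : v = r <;> simp [cutAt, hv]

lemma exists_iterate_of_reflTransGen (hG : ∀ a b, F a = some b → G a = b) {a b : Fin n}
    (h : Relation.ReflTransGen (Step F) a b) : ∃ m, G^[m] a = b := by
  induction h with
  | refl => exact ⟨0, rfl⟩
  | tail _ hbc ih =>
    obtain ⟨m, hm⟩ := ih
    exact ⟨m + 1, by rw [iterate_succ_apply', hm, hG _ _ hbc]⟩

lemma IsSpanningTree.reachedFromAll_getD (hF : IsSpanningTree T F r) (u : Fin n) :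
    ReachedFromAll (fun v => (F v).getD u) r := fun v =>
  exists_iterate_of_reflTransGen (fun a b hab => by simp [hab]) (hF.reflTransGen v)

lemma IsSpanningTree.prod_getD (hF : IsSpanningTree T F r) (u : Fin n) :
    ∏ v, T v ((F v).getD u) = forestWeight T F * T r u := by
  have hsplit : ∀ v, T v ((F v).getD u) =
      (F v).elim 1 (fun x => T v x) * if v = r then T r u else 1 := by
    intro v
    by_cases hv : v = r
    · subst hv; simp [hF.2.2]
    · obtain ⟨x, hx⟩ := hF.exists_eq_some hv
      simp [hx, hv]
  rw [prod_congr rfl fun v _ => hsplit v, prod_mul_distrib, forestWeight, prod_ite_eq']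
  simp

lemma treeWeight_mul_eq_sum_of_pos (hru : 0 < T r u) :
    treeWeight T r * T r u = ∑ G : Fin n → Fin n,
      if (∀ v, 0 < T v (G v)) ∧ ReachedFromAll G r ∧ G r = u then ∏ v, T v (G v)
      else 0 := by
  simp only [treeWeight, sum_mul, ite_mul, zero_mul]
  rw [← sum_filter, ← sum_filter]
  refine sum_nbij' (fun F v => (F v).getD u) (fun G => cutAt G r) ?_ ?_ ?_ ?_ ?_
  · intro F hF
    replace hF : IsSpanningTree T F r := (mem_filter.mp hF).2
    simp only [mem_filter, mem_univ, true_and]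
    refine ⟨fun v => ?_, hF.reachedFromAll_getD u, by simp [hF.2.2]⟩
    by_cases hv : v = r
    · subst hv; simpa [hF.2.2] using hru
    · obtain ⟨x, hx⟩ := hF.exists_eq_some hv
      simpa [hx] using (hF.1.1 v x hx).2
  · intro G hG
    simp only [mem_filter, mem_univ, true_and] at hG ⊢
    exact hG.2.1.isSpanningTree_cutAt hG.1
  · intro F hF
    replace hF : IsSpanningTree T F r := (mem_filter.mp hF).2
    funext v
    by_cases hv : v = r
    · simp [cutAt, hv, hF.2.2]
    · obtain ⟨x, hx⟩ := hF.exists_eq_some hv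
      simp [cutAt, hv, hx]
  · intro G hG
    simp only [mem_filter, mem_univ, true_and] at hG
    funext v
    by_cases hv : v = r
    · simp [cutAt, hv, hG.2.2]
    · simp [cutAt, hv]
  · intro F hF
    replace hF : IsSpanningTree T F r := (mem_filter.mp hF).2
    exact (hF.prod_getD u).symm

lemma treeWeight_mul_eq_sum (hru : 0 ≤ T r u) :
    treeWeight T r * T r u = ∑ G : Fin n → Fin n,
      if (∀ v, 0 < T v (G v)) ∧ ReachedFromAll G r ∧ G r = u then ∏ v, T v (G v)
      else 0 := by
  rcases hru.lt_or_eq with hru | hru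
  · exact treeWeight_mul_eq_sum_of_pos hru
  · rw [← hru, mul_zero]
    refine (sum_eq_zero fun G _ => if_neg ?_).symm
    rintro ⟨hpos, -, rfl⟩
    exact (hpos r).ne hru

lemma treeWeight_eq_sum (hS : IsStochastic T) (r : Fin n) :
    treeWeight T r = ∑ G : Fin n → Fin n,
      if (∀ v, 0 < T v (G v)) ∧ ReachedFromAll G r then ∏ v, T v (G v) else 0 := by
  calc treeWeight T r = ∑ u, treeWeight T r * T r u := by rw [← mul_sum, hS.2, mul_one]
    _ = _ := by
      simp only [treeWeight_mul_eq_sum (hS.1 r _)]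
      rw [sum_comm]
      simp [← and_assoc, ite_and]

lemma sum_treeWeight_mul_eq_sum (hS : IsStochastic T) (l : Fin n) :
    ∑ i, treeWeight T i * T i l = ∑ G : Fin n → Fin n,
      if (∀ v, 0 < T v (G v)) ∧ ReachedFromAll G l then ∏ v, T v (G v) else 0 := by
  simp only [treeWeight_mul_eq_sum (hS.1 _ l)]
  rw [sum_comm]
  refine sum_congr rfl fun G _ => ?_
  by_cases hpos : ∀ v, 0 < T v (G v)
  · simp only [and_iff_right hpos]
    exact sum_ite_reachedFromAll_apply_eq G l _
  · simp [hpos]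

theorem sum_treeWeight_mul (hS : IsStochastic T) (l : Fin n) :
    ∑ i, treeWeight T i * T i l = treeWeight T l := by
  rw [sum_treeWeight_mul_eq_sum hS, treeWeight_eq_sum hS]

lemma exists_pos_of_pow_succ_apply_pos (hT : ∀ i j, 0 ≤ T i j) {k : ℕ} {v j : Fin n}
    (h : 0 < (T ^ (k + 1)) v j) : ∃ u, 0 < T v u ∧ 0 < (T ^ k) u j := by
  rw [pow_succ', mul_apply] at h
  obtain ⟨u, -, hu⟩ :=
    exists_lt_of_sum_lt (s := univ) (f := fun _ => (0 : ℝ)) (by simpa using h)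
  obtain ⟨hvu, huj⟩ := (pos_and_pos_or_neg_and_neg_of_mul_pos hu).resolve_right
    fun h' => h'.1.not_ge (hT v u)
  exact ⟨u, hvu, huj⟩

theorem treeWeight_pos (hS : IsStochastic T) (hIrr : IsIrreducible T) (j : Fin n) :
    0 < treeWeight T j := by
  -- `Nat.find (hIrr v j)` is the distance from `v` to `j`; linking every `v ≠ j` to a
  -- neighbour closer to `j` gives a spanning tree converging to `j`.
  have hcloser : ∀ v, v ≠ j →
      ∃ u, 0 < T v u ∧ Nat.find (hIrr u j) < Nat.find (hIrr v j) := by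
    intro v hv
    have hspec := Nat.find_spec (hIrr v j)
    obtain ⟨k, hk⟩ : ∃ k, Nat.find (hIrr v j) = k + 1 :=
      Nat.exists_eq_add_one_of_ne_zero fun h0 => by
        rw [h0, pow_zero, one_apply_ne hv] at hspec
        exact hspec.false
    rw [hk] at hspec
    obtain ⟨u, hvu, hu⟩ := exists_pos_of_pow_succ_apply_pos hS.1 hspec
    exact ⟨u, hvu, hk ▸ Nat.lt_succ_of_le (Nat.find_min' _ hu)⟩
  choose next hpos hlt using hcloser
  set F : Fin n → Option (Fin n) := fun v => if h : v = j then none else some (next v h)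
  have hstep : ∀ a b, Step F a b → 0 < T a b ∧ Nat.find (hIrr b j) < Nat.find (hIrr a j) := by
    intro a b hab
    by_cases ha : a = j
    · simp [Step, F, ha] at hab
    · simp only [Step, F, dif_neg ha, Option.some.injEq] at hab
      subst hab
      exact ⟨hpos a ha, hlt a ha⟩
  have hdesc : ∀ a b, Relation.TransGen (Step F) a b →
      Nat.find (hIrr b j) < Nat.find (hIrr a j) := by
    intro a b h
    induction h with
    | single h => exact (hstep _ _ h).2
    | tail _ h ih => exact (hstep _ _ h).2.trans ih
  refine (isSpanningTree_of_eq_none_iff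
    ⟨fun v u hvu => ?_, fun v hv => (hdesc v v hv).false⟩ fun v => ?_).treeWeight_pos
  · obtain ⟨hvu, hd⟩ := hstep v u hvu
    exact ⟨fun h => (h ▸ hd).false, hvu⟩
  · by_cases hv : v = j <;> simp [F, hv]

end TreeTheorem

section FirstPassage

variable (T : Matrix (Fin n) (Fin n) ℝ)

lemma pathProb_cons (k : ℕ) (x : Fin n) (q : Fin (k + 1) → Fin n) :
    pathProb T (k + 1) (Fin.cons x q) = T x (q 0) * pathProb T k q := by
  rw [pathProb, Fin.prod_univ_succ, pathProb]
  rfl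

lemma sum_ite_pathProb_succ (k : ℕ) (i : Fin n) (P : (Fin (k + 1) → Fin n) → Prop)
    [DecidablePred P] :
    ∑ p : Fin (k + 2) → Fin n,
        (if p 0 = i ∧ P (Fin.tail p) then pathProb T (k + 1) p else 0) =
      ∑ m, T i m *
        ∑ q : Fin (k + 1) → Fin n, if q 0 = m ∧ P q then pathProb T k q else 0 := by
  rw [← (Fin.consEquiv fun _ => Fin n).sum_comp, Fintype.sum_prod_type]
  simp only [Fin.consEquiv, Equiv.coe_fn_mk, Fin.cons_zero, Fin.tail_cons, pathProb_cons,
    mul_sum]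
  conv_rhs => rw [sum_comm]
  simp [ite_and]

lemma firstPassageProb_succ (i j : Fin n) (k : ℕ) :
    firstPassageProb T i j (k + 1) = ∑ m, T i m * ∑ q : Fin (k + 1) → Fin n,
      if q 0 = m ∧ q (Fin.last k) = j ∧ (∀ s, s ≠ Fin.last k → q s ≠ j)
        then pathProb T k q else 0 := by
  rw [firstPassageProb, ← sum_ite_pathProb_succ T k i
    fun q => q (Fin.last k) = j ∧ ∀ s, s ≠ Fin.last k → q s ≠ j]
  refine sum_congr rfl fun p _ => if_congr ?_ rfl rfl
  simp [Fin.forall_fin_succ, Fin.tail, ← Fin.succ_last, Fin.succ_inj]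

lemma firstPassageProb_one (i j : Fin n) : firstPassageProb T i j 1 = T i j := by
  rw [firstPassageProb_succ]
  simp_rw [← (Equiv.funUnique (Fin 1) (Fin n)).symm.sum_comp]
  simp [pathProb, Fin.last, -sum_boole, ite_and]

lemma firstPassageProb_add_two (i j : Fin n) (k : ℕ) :
    firstPassageProb T i j (k + 2) =
      ∑ m ∈ univ.erase j, T i m * firstPassageProb T m j (k + 1) := by
  rw [firstPassageProb_succ, ← sum_erase _ ?_]
  · refine sum_congr rfl fun m hm => congrArg _ (sum_congr rfl fun q _ => if_congr ?_ rfl rfl)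
    refine and_congr_right fun hq0 => and_congr_right fun _ =>
      ⟨fun h t _ => h t, fun h s hs => ?_⟩
    rcases eq_or_ne s 0 with rfl | hs0
    · exact hq0 ▸ ne_of_mem_erase hm
    · exact h s hs0 hs
  · refine mul_eq_zero_of_right _ (sum_eq_zero fun q _ => if_neg ?_)
    rintro ⟨hq0, -, hne⟩
    exact hne 0 Fin.last_pos.ne hq0

end FirstPassage

/-- The probability that the chain started at `i` avoids `j` at times `1, …, k`. -/
noncomputable def avoidProb (T : Matrix (Fin n) (Fin n) ℝ) (j : Fin n) : ℕ → Fin n → ℝ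
  | 0, _ => 1
  | k + 1, i => ∑ m ∈ univ.erase j, T i m * avoidProb T j k m

section Avoid

variable {T : Matrix (Fin n) (Fin n) ℝ} {j : Fin n}

lemma avoidProb_nonneg (hT : ∀ i j, 0 ≤ T i j) (k : ℕ) (i : Fin n) :
    0 ≤ avoidProb T j k i := by
  induction k generalizing i with
  | zero => exact zero_le_one
  | succ k ih => exact sum_nonneg fun m _ => mul_nonneg (hT i m) (ih m)

lemma firstPassageProb_nonneg (hT : ∀ i j, 0 ≤ T i j) (i j : Fin n) (k : ℕ) :
    0 ≤ firstPassageProb T i j k :=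
  sum_nonneg fun p _ => by
    split_ifs
    exacts [prod_nonneg fun t _ => hT _ _, le_rfl]

lemma avoidProb_eq_avoidProb_succ_add (hS : IsStochastic T) (k : ℕ) (i : Fin n) :
    avoidProb T j k i = avoidProb T j (k + 1) i + firstPassageProb T i j (k + 1) := by
  induction k generalizing i with
  | zero => simp [avoidProb, firstPassageProb_one, hS.2 i]
  | succ k ih =>
    rw [avoidProb, avoidProb, firstPassageProb_add_two, ← sum_add_distrib]
    simp only [ih, mul_add]

lemma avoidProb_antitone (hS : IsStochastic T) (i : Fin n) :
    Antitone fun k => avoidProb T j k i :=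
  antitone_nat_of_succ_le fun k => by
    rw [avoidProb_eq_avoidProb_succ_add hS k i (j := j)]
    linarith [firstPassageProb_nonneg hS.1 i j (k + 1)]

lemma firstPassageProb_succ_le_avoidProb (hS : IsStochastic T) (k : ℕ) (i : Fin n) :
    firstPassageProb T i j (k + 1) ≤ avoidProb T j k i := by
  rw [avoidProb_eq_avoidProb_succ_add hS k i (j := j)]
  linarith [avoidProb_nonneg hS.1 (k + 1) i (j := j)]

lemma sum_range_firstPassageProb (hS : IsStochastic T) (i : Fin n) (K : ℕ) :
    ∑ k ∈ range K, firstPassageProb T i j (k + 1) = 1 - avoidProb T j K i := by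
  induction K with
  | zero => simp [avoidProb]
  | succ K ih =>
    rw [sum_range_succ, ih, avoidProb_eq_avoidProb_succ_add hS K i]
    ring

lemma avoidProb_add_pow_le_one (hS : IsStochastic T) (k : ℕ) (i : Fin n) :
    avoidProb T j (k + 1) i + (T ^ (k + 1)) i j ≤ 1 := by
  induction k generalizing i with
  | zero => simp [avoidProb, hS.2 i]
  | succ k ih =>
    have hjj : (T ^ (k + 1)) j j ≤ 1 := by
      linarith [ih j, avoidProb_nonneg hS.1 (k + 1) j (j := j)]
    calc avoidProb T j (k + 2) i + (T ^ (k + 2)) i j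
        = ∑ m ∈ univ.erase j, T i m * (avoidProb T j (k + 1) m + (T ^ (k + 1)) m j)
            + T i j * (T ^ (k + 1)) j j := by
          rw [pow_succ' T (k + 1), mul_apply, ← sum_erase_add _ _ (mem_univ j), avoidProb]
          simp only [mul_add, sum_add_distrib]
          ring
      _ ≤ ∑ m ∈ univ.erase j, T i m * 1 + T i j * 1 := by
          gcongr with m
          · exact hS.1 i m
          · exact ih m
          · exact hS.1 i j
      _ = 1 := by simp [hS.2 i]

lemma avoidProb_add_le_mul (hS : IsStochastic T) {K : ℕ} {ρ : ℝ}
    (hK : ∀ i, avoidProb T j K i ≤ ρ) (k : ℕ) (i : Fin n) :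
    avoidProb T j (k + K) i ≤ ρ * avoidProb T j k i := by
  induction k generalizing i with
  | zero => simpa [avoidProb] using hK i
  | succ k ih =>
    rw [add_right_comm, avoidProb, avoidProb, mul_sum]
    refine sum_le_sum fun m _ => ?_
    calc T i m * avoidProb T j (k + K) m ≤ T i m * (ρ * avoidProb T j k m) :=
          mul_le_mul_of_nonneg_left (ih m) (hS.1 i m)
      _ = ρ * (T i m * avoidProb T j k m) := by ring

lemma avoidProb_le_geometric (hS : IsStochastic T) {K : ℕ} {ρ : ℝ} (hK0 : 0 < K)
    (hρ0 : 0 < ρ) (hρ1 : ρ < 1) (hK : ∀ i, avoidProb T j K i ≤ ρ) :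
    ∃ C r : ℝ, 0 ≤ r ∧ r < 1 ∧ ∀ k i, avoidProb T j k i ≤ C * r ^ k := by
  have hpow : ∀ q i, avoidProb T j (q * K) i ≤ ρ ^ q := by
    intro q
    induction q with
    | zero => simp [avoidProb]
    | succ q ih =>
      intro i
      calc avoidProb T j ((q + 1) * K) i ≤ ρ * avoidProb T j (q * K) i := by
            rw [add_one_mul]; exact avoidProb_add_le_mul hS hK _ i
        _ ≤ ρ * ρ ^ q := mul_le_mul_of_nonneg_left (ih i) hρ0.le
        _ = ρ ^ (q + 1) := (pow_succ' ρ q).symm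
  set r := ρ ^ (K⁻¹ : ℝ)
  have hrK : r ^ K = ρ := Real.rpow_inv_natCast_pow hρ0.le hK0.ne'
  have hr0 : 0 ≤ r := Real.rpow_nonneg hρ0.le _
  have hr1 : r < 1 := Real.rpow_lt_one hρ0.le hρ1 (by positivity)
  refine ⟨ρ⁻¹, r, hr0, hr1, fun k i => ?_⟩
  calc avoidProb T j k i ≤ avoidProb T j (k / K * K) i :=
        avoidProb_antitone hS i (Nat.div_mul_le_self k K)
    _ ≤ ρ ^ (k / K) := hpow _ i
    _ = ρ⁻¹ * r ^ (K * (k / K) + K) := by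
        rw [pow_add, pow_mul, hrK, mul_comm, mul_assoc, mul_inv_cancel₀ hρ0.ne', mul_one]
    _ ≤ ρ⁻¹ * r ^ k := by
        refine mul_le_mul_of_nonneg_left (pow_le_pow_of_le_one hr0 hr1.le ?_) (by positivity)
        rw [mul_comm]
        exact (Nat.lt_div_mul_add hK0).le

end Avoid

section Irreducible

variable {T : Matrix (Fin n) (Fin n) ℝ}

lemma exists_pow_succ_apply_pos (hS : IsStochastic T) (hIrr : IsIrreducible T) (i j : Fin n) :
    ∃ k, 0 < (T ^ (k + 1)) i j := by
  obtain ⟨l, -, hl⟩ := exists_lt_of_sum_lt (s := univ) (f := fun _ => (0 : ℝ)) (g := T i)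
    (by simp [hS.2 i])
  obtain ⟨k, hk⟩ := hIrr l j
  refine ⟨k, ?_⟩
  rw [pow_succ', mul_apply]
  exact (mul_pos hl hk).trans_le <| single_le_sum
    (fun m _ => mul_nonneg (hS.1 i m) (pow_apply_nonneg hS.1 k m j)) (mem_univ l)

lemma exists_avoidProb_le (hS : IsStochastic T) (hIrr : IsIrreducible T) (j : Fin n) :
    ∃ K ρ, 0 < K ∧ 0 < ρ ∧ ρ < 1 ∧ ∀ i, avoidProb T j K i ≤ ρ := by
  choose k hk using fun i => exists_pow_succ_apply_pos hS hIrr i j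
  have : Nonempty (Fin n) := ⟨j⟩
  obtain ⟨i₀, hi₀⟩ := Finite.exists_min fun i => (T ^ (k i + 1)) i j
  set ε := (T ^ (k i₀ + 1)) i₀ j
  have hε1 : ε ≤ 1 := by
    linarith [avoidProb_add_pow_le_one hS (k i₀) i₀ (j := j),
      avoidProb_nonneg hS.1 (k i₀ + 1) i₀ (j := j)]
  -- `ρ = 1 - ε` would do, except that it may vanish
  refine ⟨∑ i, (k i + 1), 1 - ε / 2, sum_pos (fun i _ => (k i).succ_pos) univ_nonempty,
    by linarith, by linarith [hk i₀], fun i => ?_⟩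
  calc avoidProb T j (∑ i, (k i + 1)) i ≤ avoidProb T j (k i + 1) i :=
        avoidProb_antitone hS i (single_le_sum (fun i _ => (k i).succ_pos.le) (mem_univ i))
    _ ≤ 1 - (T ^ (k i + 1)) i j := by linarith [avoidProb_add_pow_le_one hS (k i) i (j := j)]
    _ ≤ 1 - ε / 2 := by linarith [hi₀ i, hk i₀]

lemma exists_avoidProb_le_geometric (hS : IsStochastic T) (hIrr : IsIrreducible T)
    (j : Fin n) :
    ∃ C r : ℝ, 0 ≤ r ∧ r < 1 ∧ ∀ k i, avoidProb T j k i ≤ C * r ^ k := by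
  obtain ⟨K, ρ, hK0, hρ0, hρ1, hK⟩ := exists_avoidProb_le hS hIrr j
  exact avoidProb_le_geometric hS hK0 hρ0 hρ1 hK

lemma hasSum_firstPassageProb (hS : IsStochastic T) (hIrr : IsIrreducible T)
    (i j : Fin n) :
    HasSum (fun k => firstPassageProb T i j (k + 1)) 1 := by
  obtain ⟨C, r, hr0, hr1, hC⟩ := exists_avoidProb_le_geometric hS hIrr j
  have havoid : Tendsto (fun K => avoidProb T j K i) atTop (𝓝 0) := by
    refine squeeze_zero (fun K => avoidProb_nonneg hS.1 K i) (fun K => hC K i) ?_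
    simpa using (tendsto_pow_atTop_nhds_zero_of_lt_one hr0 hr1).const_mul C
  rw [hasSum_iff_tendsto_nat_of_nonneg (fun k => firstPassageProb_nonneg hS.1 i j _)]
  simp_rw [sum_range_firstPassageProb hS]
  simpa using havoid.const_sub 1

lemma summable_mul_firstPassageProb (hS : IsStochastic T) (hIrr : IsIrreducible T)
    (i j : Fin n) :
    Summable fun k : ℕ => ((k : ℝ) + 1) * firstPassageProb T i j (k + 1) := by
  obtain ⟨C, r, hr0, hr1, hC⟩ := exists_avoidProb_le_geometric hS hIrr j
  have hnorm : ‖r‖ < 1 := by rwa [Real.norm_of_nonneg hr0]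
  have hgeom : Summable fun k : ℕ => C * (((k : ℝ) + 1) * r ^ k) := by
    refine Summable.mul_left C ?_
    simpa [add_mul] using (summable_pow_mul_geometric_of_norm_lt_one 1 hnorm).add
      (summable_geometric_of_lt_one hr0 hr1)
  refine hgeom.of_nonneg_of_le
    (fun k => mul_nonneg (by positivity) (firstPassageProb_nonneg hS.1 i j _)) fun k => ?_
  calc ((k : ℝ) + 1) * firstPassageProb T i j (k + 1) ≤ ((k : ℝ) + 1) * (C * r ^ k) :=
        mul_le_mul_of_nonneg_left ((firstPassageProb_succ_le_avoidProb hS k i).trans (hC k i))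
          (by positivity)
    _ = C * (((k : ℝ) + 1) * r ^ k) := by ring

lemma hasSum_mfpt (hS : IsStochastic T) (hIrr : IsIrreducible T)
    (i j : Fin n) :
    HasSum (fun k : ℕ => ((k : ℝ) + 1) * firstPassageProb T i j (k + 1)) (mfpt T i j) := by
  have hsum : Summable fun k : ℕ => (k : ℝ) * firstPassageProb T i j k :=
    (summable_nat_add_iff 1).mp (by simpa using summable_mul_firstPassageProb hS hIrr i j)
  simpa [mfpt] using (hasSum_nat_add_iff' 1).mpr hsum.hasSum

lemma mfpt_eq_one_add_sum (hS : IsStochastic T) (hIrr : IsIrreducible T)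
    (i j : Fin n) :
    mfpt T i j = 1 + ∑ l ∈ univ.erase j, T i l * mfpt T l j := by
  have htail := hasSum_sum fun l (_ : l ∈ univ.erase j) =>
    ((hasSum_mfpt hS hIrr l j).add (hasSum_firstPassageProb hS hIrr l j)).mul_left (T i l)
  have hall := HasSum.zero_add
    (f := fun k : ℕ => ((k : ℝ) + 1) * firstPassageProb T i j (k + 1))
    (htail.congr_fun fun k => by
      simp only [firstPassageProb_add_two, mul_sum]
      refine sum_congr rfl fun l _ => ?_
      push_cast
      ring)
  rw [(hasSum_mfpt hS hIrr i j).unique hall]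
  simp only [Nat.cast_zero, zero_add, one_mul, firstPassageProb_one, mul_add, mul_one,
    sum_add_distrib]
  rw [← hS.2 i, ← add_sum_erase _ _ (mem_univ j)]
  ring

theorem mul_mfpt_self_eq_sum (hS : IsStochastic T) (hIrr : IsIrreducible T)
    (π : Fin n → ℝ) (hπ : ∀ l, ∑ i, π i * T i l = π l) (j : Fin n) :
    π j * mfpt T j j = ∑ i, π i := by
  have key : ∑ i, π i * mfpt T i j = ∑ i, π i + ∑ l ∈ univ.erase j, π l * mfpt T l j :=
    calc ∑ i, π i * mfpt T i j
        = ∑ i, π i * (1 + ∑ l ∈ univ.erase j, T i l * mfpt T l j) :=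
          sum_congr rfl fun i _ => by rw [← mfpt_eq_one_add_sum hS hIrr]
      _ = ∑ i, π i + ∑ l ∈ univ.erase j, (∑ i, π i * T i l) * mfpt T l j := by
          simp only [mul_add, mul_one, sum_add_distrib, mul_sum, sum_mul]
          rw [sum_comm]
          simp only [mul_assoc]
      _ = ∑ i, π i + ∑ l ∈ univ.erase j, π l * mfpt T l j := by simp only [hπ]
  rw [← add_sum_erase _ _ (mem_univ j)] at key
  linarith

end Irreducible

theorem mean_return_time_general {n : ℕ} (T : Matrix (Fin n) (Fin n) ℝ)
    (hS : IsStochastic T) (hIrr : IsIrreducible T) :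
    ∀ j, sigmaW T (n - 1) = ∑ k, treeWeight T k ∧
      mfpt T j j = sigmaW T (n - 1) / treeWeight T j := by
  intro j
  have hσ := sigmaW_eq_sum_treeWeight T j.pos
  refine ⟨hσ, ?_⟩
  rw [hσ, eq_div_iff (treeWeight_pos hS hIrr j).ne', mul_comm]
  exact mul_mfpt_self_eq_sum hS hIrr _ (sum_treeWeight_mul hS) j

/-- The mean return time to `j` is `m_{jj} = σ_{n-1}/q_j`, where
`σ_{n-1} = Σ_k q_k` is the total weight of all spanning converging trees. -/
theorem mean_return_time {n : ℕ} (T : Matrix (Fin n) (Fin n) ℝ)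
    (hS : IsStochastic T) (hIrr : IsIrreducible T) (hErg : IsErgodic T) :
    ∀ j, sigmaW T (n - 1) = ∑ k, treeWeight T k ∧
      mfpt T j j = sigmaW T (n - 1) / treeWeight T j :=
  mean_return_time_general T hS hIrr

end MFPT
end

section
/- Let G be a weighted digraph on n vertices with Laplacian L and in-forest dimension d. Then every spanning in-forest of G with the maximal number of arcs has exactly n - d arcs and d weak components, and the total weight σ_{n-d} of maximum in-forests is positive while σ_k = 0 for k > n - d. -/
open scoped Classical
open Finset Matrix

namespace MFPT

/-- Every maximum in-forest of a digraph of in-forest dimension `d`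
has exactly `n - d` arcs and `d` weak components (roots); moreover `σ_{n-d} > 0`
while `σ_k = 0` for `k > n - d`. -/
theorem maximum_inforests {n : ℕ} (w : Matrix (Fin n) (Fin n) ℝ)
    (hw : ∀ i j, 0 ≤ w i j) (hloop : ∀ i, w i i = 0)
    (d : ℕ) (hdn : d ≤ n)
    (hmax : ∃ F, IsInForest w F ∧ arcCount F = n - d)
    (hbound : ∀ F, IsInForest w F → arcCount F ≤ n - d) :
    (∀ F, IsInForest w F → (∀ F', IsInForest w F' → arcCount F' ≤ arcCount F) →
        arcCount F = n - d ∧ (Finset.univ.filter fun v => F v = none).card = d) ∧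
      0 < sigmaW w (n - d) ∧ ∀ k, n - d < k → sigmaW w k = 0 := by
  obtain ⟨F0, hF0, hF0card⟩ := hmax
  refine ⟨?_, ?_, ?_⟩
  · intro F hF hFmax
    have h1 : arcCount F = n - d :=
      le_antisymm (hbound F hF) (hF0card ▸ hFmax F0 hF0)
    refine ⟨h1, ?_⟩
    have hpart := Finset.card_filter_add_card_filter_not
      (s := (Finset.univ : Finset (Fin n))) (p := fun v => (F v).isSome)
    have hnone : (Finset.univ.filter fun v => F v = none) =
        (Finset.univ.filter fun v => ¬ (F v).isSome) := by
      apply Finset.filter_congr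
      intro v _
      simp [Option.not_isSome_iff_eq_none]
    rw [hnone]
    have : arcCount F + (Finset.univ.filter fun v => ¬ (F v).isSome).card = n := by
      simpa [arcCount] using hpart
    omega
  · have hnn : ∀ F ∈ (Finset.univ : Finset (Fin n → Option (Fin n))),
        0 ≤ if IsInForest w F ∧ arcCount F = n - d then forestWeight w F else 0 := by
      intro F _
      split
      · rename_i hF
        apply Finset.prod_nonneg
        intro v _
        cases hv : F v with
        | none => simp
        | some u => simpa [hv] using (hF.1.1 v u hv).2.le
      · exact le_refl 0
    rw [sigmaW]
    refine Finset.sum_pos' hnn ⟨F0, Finset.mem_univ _, ?_⟩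
    rw [if_pos ⟨hF0, hF0card⟩]
    apply Finset.prod_pos
    intro v _
    cases hv : F0 v with
    | none => simp
    | some u => simpa [hv] using (hF0.1 v u hv).2
  · intro k hk
    rw [sigmaW]
    apply Finset.sum_eq_zero
    intro F _
    rw [if_neg]
    rintro ⟨hF, rfl⟩
    exact absurd (hbound F hF) (not_le.mpr hk)

end MFPT
end
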